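/- arXiv:1102.4361 — 2 statements merged into one kernel-verified Lean document; each statement's English description precedes it below -/
import Mathlib

section
/- (Corollary 3.3, Fedorov–Jovanović, Euclidean case Q̄ = ℝ^n.) Let X be a smooth vector field on ℝ^n × ℝ^n, let f: ℝ^n → ℝ be smooth and nowhere-vanishing, and let X_C be the Chaplygin-rescaled vector field. If X_C is Hamiltonian, i.e. there exists a smooth function H_C: ℝ^n × ℝ^n → ℝ with Ω(X_C(z), v) = DH_C(z)[v] for all z and v, then div(f^{n−1}X) = 0 identically; that is, X preserves the measure f(q)^{n−1} dq dp. -/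
noncomputable section

open Matrix

/-- Configuration vectors: points of `ℝⁿ`. -/
abbrev Vec (n : ℕ) : Type := Fin n → ℝ

/-- Phase space `ℝⁿ × ℝⁿ`, points `z = (q, p)`. -/
abbrev Phase (n : ℕ) : Type := Vec n × Vec n

/-- Canonical symplectic form `Ω(u,v) = ⟨u_q, v_p⟩ − ⟨u_p, v_q⟩`. -/
def Omega {n : ℕ} (u v : Phase n) : ℝ := u.1 ⬝ᵥ v.2 - u.2 ⬝ᵥ v.1

/-- Liouville one-form `Θ_z(v) = ⟨p, v_q⟩` at `z = (q,p)`. -/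
def Theta {n : ℕ} (z v : Phase n) : ℝ := z.2 ⬝ᵥ v.1

/-- Fiber scaling `Ψ_f(q,p) = (q, f(q)·p)`. -/
def Psi {n : ℕ} (f : Vec n → ℝ) (z : Phase n) : Phase n := (z.1, f z.1 • z.2)

/-- `Ψ_{1/f}`, the inverse of `Ψ_f`. -/
def PsiInv {n : ℕ} (f : Vec n → ℝ) : Phase n → Phase n := Psi fun q => (f q)⁻¹

/-- The Chaplygin-rescaled vector field
`X_C(z) := DΨ_f(Ψ_{1/f}(z))[(1/f(q))·X(Ψ_{1/f}(z))]`. -/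
def ChapRescale {n : ℕ} (f : Vec n → ℝ) (X : Phase n → Phase n) (z : Phase n) : Phase n :=
  fderiv ℝ (Psi f) (PsiInv f z) ((f z.1)⁻¹ • X (PsiInv f z))

/-- The two-form `df ∧ Θ`. -/
def dfTheta {n : ℕ} (f : Vec n → ℝ) (z u v : Phase n) : ℝ :=
  fderiv ℝ f z.1 u.1 * (z.2 ⬝ᵥ v.1) - fderiv ℝ f z.1 v.1 * (z.2 ⬝ᵥ u.1)

/-- Divergence of a vector field: `div Y (z) = trace DY(z)`. -/
def divergence {n : ℕ} (Y : Phase n → Phase n) (z : Phase n) : ℝ :=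
  LinearMap.trace ℝ (Phase n) (fderiv ℝ Y z).toLinearMap

/-!
Ω-duality identifies a Hamiltonian field with `(∂_p H, -∂_q H)`, which is divergence free because
the mixed second derivatives of `H` commute. Undoing the rescaling gives `X = f · Ψ_f^* X_C`. Since
`det DΨ_f = f^n`, the weighted pullback `f^n · Ψ_f^* Z` of any field `Z` has divergence
`f^n · (div Z) ∘ Ψ_f`; for `Z = X_C` this is `div (f^(n-1) X) = 0`.
-/

section
variable {n : ℕ}

lemma divergence_eq_sum (Y : Phase n → Phase n) (z : Phase n) :
    divergence Y z = ∑ i, (fderiv ℝ Y z (Pi.single i 1, 0)).1 i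
      + ∑ i, (fderiv ℝ Y z (0, Pi.single i 1)).2 i := by
  rw [divergence, LinearMap.trace_eq_matrix_trace ℝ
    ((Pi.basisFun ℝ (Fin n)).prod (Pi.basisFun ℝ (Fin n))), Matrix.trace, Fintype.sum_sum_type]
  simp [Matrix.diag, LinearMap.toMatrix_apply]

lemma divergence_smul {g : Phase n → ℝ} {Y : Phase n → Phase n} {z : Phase n}
    (hg : DifferentiableAt ℝ g z) (hY : DifferentiableAt ℝ Y z) :
    divergence (fun w => g w • Y w) z = g z * divergence Y z + fderiv ℝ g z (Y z) := by
  rw [divergence, fderiv_fun_smul hg hY, divergence]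
  simp [LinearMap.trace_smulRight]

lemma map_eq_sum_single {ι F : Type*} [Fintype ι] [DecidableEq ι] [AddCommGroup F] [Module ℝ F]
    [TopologicalSpace F] (L : (ι → ℝ) →L[ℝ] F) (v : ι → ℝ) : L v = ∑ i, v i • L (Pi.single i 1) := by
  conv_lhs => rw [← Finset.univ_sum_single v]
  refine (map_sum L _ _).trans (Finset.sum_congr rfl fun i _ => ?_)
  rw [show Pi.single i (v i) = v i • Pi.single i (1 : ℝ) by ext j; simp [Pi.single_apply], map_smul]

lemma sum_apply_single_mul {ι : Type*} [Fintype ι] [DecidableEq ι] (L : (ι → ℝ) →L[ℝ] ℝ)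
    (v : ι → ℝ) : ∑ i, L (Pi.single i 1) * v i = L v := by
  simp [map_eq_sum_single L v, mul_comm]

variable (n) in
def symplecticDual : (Phase n →L[ℝ] ℝ) →L[ℝ] Phase n :=
  (ContinuousLinearMap.pi fun i => ContinuousLinearMap.apply ℝ ℝ ((0, Pi.single i 1) : Phase n)).prod
    (-ContinuousLinearMap.pi fun i => ContinuousLinearMap.apply ℝ ℝ ((Pi.single i 1, 0) : Phase n))

@[simp] lemma symplecticDual_fst (L : Phase n →L[ℝ] ℝ) (i : Fin n) :
    (symplecticDual n L).1 i = L (0, Pi.single i 1) := rfl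

@[simp] lemma symplecticDual_snd (L : Phase n →L[ℝ] ℝ) (i : Fin n) :
    (symplecticDual n L).2 i = -L (Pi.single i 1, 0) := rfl

lemma eq_symplecticDual_of_omega {u : Phase n} {L : Phase n →L[ℝ] ℝ}
    (h : ∀ v, Omega u v = L v) : u = symplecticDual n L := by
  ext i
  · simpa [Omega] using h (0, Pi.single i 1)
  · simpa [Omega, neg_eq_iff_eq_neg] using h (Pi.single i 1, 0)

def hamiltonianField (H : Phase n → ℝ) (z : Phase n) : Phase n :=
  symplecticDual n (fderiv ℝ H z)

lemma eq_hamiltonianField_of_omega {Z : Phase n → Phase n} {H : Phase n → ℝ}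
    (h : ∀ z v, Omega (Z z) v = fderiv ℝ H z v) : Z = hamiltonianField H :=
  funext fun z => eq_symplecticDual_of_omega (h z)

lemma hasFDerivAt_hamiltonianField {H : Phase n → ℝ} (hH : ContDiff ℝ 2 H) (z : Phase n) :
    HasFDerivAt (hamiltonianField H) ((symplecticDual n).comp (fderiv ℝ (fderiv ℝ H) z)) z :=
  (symplecticDual n).hasFDerivAt.comp z
    ((hH.fderiv_right one_add_one_eq_two.le).differentiable one_ne_zero z).hasFDerivAt

lemma divergence_hamiltonianField {H : Phase n → ℝ} (hH : ContDiff ℝ 2 H) (z : Phase n) :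
    divergence (hamiltonianField H) z = 0 := by
  have hsymm : IsSymmSndFDerivAt ℝ H z := hH.contDiffAt.isSymmSndFDerivAt (by simp)
  rw [divergence_eq_sum, (hasFDerivAt_hamiltonianField hH z).fderiv]
  simp [hsymm (Pi.single _ 1, 0)]

lemma hasFDerivAt_psi {f : Vec n → ℝ} {w : Phase n} (hf : DifferentiableAt ℝ f w.1) :
    HasFDerivAt (Psi f)
      ((ContinuousLinearMap.fst ℝ (Vec n) (Vec n)).prod
        (f w.1 • ContinuousLinearMap.snd ℝ (Vec n) (Vec n) +
          ((fderiv ℝ f w.1).comp (ContinuousLinearMap.fst ℝ (Vec n) (Vec n))).smulRight w.2)) w :=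
  hasFDerivAt_fst.prodMk ((hf.hasFDerivAt.comp w hasFDerivAt_fst).smul hasFDerivAt_snd)

lemma psiInv_psi {f : Vec n → ℝ} (hf0 : ∀ q, f q ≠ 0) (w : Phase n) : PsiInv f (Psi f w) = w := by
  simp [PsiInv, Psi, smul_smul, inv_mul_cancel₀ (hf0 w.1)]

lemma chapRescale_psi {f : Vec n → ℝ} (hf : Differentiable ℝ f) (hf0 : ∀ q, f q ≠ 0)
    (X : Phase n → Phase n) (w : Phase n) :
    ChapRescale f X (Psi f w) =
      ((f w.1)⁻¹ • (X w).1, ((f w.1)⁻¹ * fderiv ℝ f w.1 (X w).1) • w.2 + (X w).2) := by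
  rw [ChapRescale, psiInv_psi hf0, (hasFDerivAt_psi (hf w.1)).fderiv]
  ext i
  · simp [Psi]
  · simp [Psi, smul_smul, inv_mul_cancel₀ (hf0 w.1), add_comm]

/-- `f · (Ψ_f)^* Z`, that is `w ↦ f(q) · DΨ_f(w)⁻¹ Z(Ψ_f w)`. -/
def chaplyginPullback (f : Vec n → ℝ) (Z : Phase n → Phase n) (w : Phase n) : Phase n :=
  (f w.1 • (Z (Psi f w)).1, (Z (Psi f w)).2 - fderiv ℝ f w.1 (Z (Psi f w)).1 • w.2)

lemma chaplyginPullback_chapRescale {f : Vec n → ℝ} (hf : Differentiable ℝ f)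
    (hf0 : ∀ q, f q ≠ 0) (X : Phase n → Phase n) : chaplyginPullback f (ChapRescale f X) = X := by
  funext w
  rw [chaplyginPullback, chapRescale_psi hf hf0]
  ext i
  · simp [mul_inv_cancel_left₀ (hf0 w.1)]
  · simp

lemma differentiable_chaplyginPullback {f : Vec n → ℝ} {Z : Phase n → Phase n}
    (hf : ContDiff ℝ 2 f) (hZ : Differentiable ℝ Z) : Differentiable ℝ (chaplyginPullback f Z) := by
  have hf1 : Differentiable ℝ f := hf.differentiable two_ne_zero
  have hdf : Differentiable ℝ (fderiv ℝ f) :=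
    (hf.fderiv_right one_add_one_eq_two.le).differentiable one_ne_zero
  unfold chaplyginPullback Psi
  fun_prop

lemma divergence_chaplyginPullback {f : Vec n → ℝ} {Z : Phase n → Phase n}
    (hf : ContDiff ℝ 2 f) (hZ : Differentiable ℝ Z) (w : Phase n) :
    divergence (chaplyginPullback f Z) w
      = f w.1 * divergence Z (Psi f w) + (1 - n) * fderiv ℝ f w.1 (Z (Psi f w)).1 := by
  have hf1 : Differentiable ℝ f := hf.differentiable two_ne_zero
  have hdf : HasFDerivAt (fun w : Phase n => fderiv ℝ f w.1)
      ((fderiv ℝ (fderiv ℝ f) w.1).comp (ContinuousLinearMap.fst ℝ (Vec n) (Vec n))) w :=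
    ((hf.fderiv_right one_add_one_eq_two.le).differentiable one_ne_zero w.1).hasFDerivAt.comp w
      hasFDerivAt_fst
  have hfw : HasFDerivAt (fun w : Phase n => f w.1)
      ((fderiv ℝ f w.1).comp (ContinuousLinearMap.fst ℝ (Vec n) (Vec n))) w :=
    (hf1 w.1).hasFDerivAt.comp w hasFDerivAt_fst
  have hZΨ := (hZ (Psi f w)).hasFDerivAt.comp w (hasFDerivAt_psi (hf1 w.1))
  have hP : HasFDerivAt (chaplyginPullback f Z) _ w :=
    (hfw.smul (hasFDerivAt_fst.comp w hZΨ)).prodMk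
      ((hasFDerivAt_snd.comp w hZΨ).sub
        ((hdf.clm_apply (hasFDerivAt_fst.comp w hZΨ)).smul hasFDerivAt_snd))
  rw [divergence_eq_sum, hP.fderiv, divergence_eq_sum]
  set D := fderiv ℝ Z (Psi f w)
  set L := fderiv ℝ f w.1
  have hD_q (x : Fin n) : D (Pi.single x 1, L (Pi.single x 1) • w.2)
      = D (Pi.single x 1, 0) + L (Pi.single x 1) • D (0, w.2) := by
    rw [← map_smul, ← map_add]; simp
  have hD_p (x : Fin n) : D (0, f w.1 • Pi.single x 1) = f w.1 • D (0, Pi.single x 1) := by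
    rw [← map_smul]; simp
  -- the mixed terms `f(q) · df_q (DZ (0, p))_q` of the two diagonal blocks cancel
  have hLD : ∑ x, L (Pi.single x 1) * (D (0, w.2)).1 x = ∑ x, L (D (0, Pi.single x 1)).1 * w.2 x := by
    have hp : D (0, w.2) = ∑ x, w.2 x • D (0, Pi.single x 1) := by
      simpa using map_eq_sum_single (D.comp (.inr ℝ (Vec n) (Vec n))) w.2
    rw [sum_apply_single_mul, hp, Prod.fst_sum, map_sum]
    simp [mul_comm]
  simp only [Function.comp_apply, ContinuousLinearMap.prod_apply, ContinuousLinearMap.comp_apply,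
    ContinuousLinearMap.coe_fst', ContinuousLinearMap.coe_snd', ContinuousLinearMap.smulRight_apply,
    ContinuousLinearMap.flip_apply, _root_.add_apply, _root_.sub_apply, _root_.smul_apply,
    _root_.zero_apply, Pi.add_apply, Pi.sub_apply, Pi.smul_apply, Pi.single_eq_same, hD_q, hD_p,
    map_add, map_smul, map_zero, smul_add, smul_zero, zero_smul, smul_eq_mul, zero_add, add_zero,
    mul_one, Finset.sum_add_distrib, Finset.sum_sub_distrib, Finset.sum_const, Finset.card_univ,
    Fintype.card_fin, nsmul_eq_mul, ← Finset.mul_sum, sum_apply_single_mul, hLD, mul_assoc]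
  ring

lemma divergence_pow_smul_chaplyginPullback {f : Vec n → ℝ} {Z : Phase n → Phase n} (hn : 1 ≤ n)
    (hf : ContDiff ℝ 2 f) (hZ : Differentiable ℝ Z) (w : Phase n) :
    divergence (fun w => f w.1 ^ (n - 1) • chaplyginPullback f Z w) w
      = f w.1 ^ n * divergence Z (Psi f w) := by
  obtain ⟨m, rfl⟩ : ∃ m, n = m + 1 := ⟨n - 1, by omega⟩
  have hg : HasFDerivAt (fun w : Phase (m + 1) => f w.1 ^ m)
      ((m • f w.1 ^ (m - 1)) • (fderiv ℝ f w.1).comp (ContinuousLinearMap.fst ℝ _ _)) w :=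
    ((hf.differentiable two_ne_zero w.1).hasFDerivAt.comp w hasFDerivAt_fst).pow m
  rw [Nat.add_sub_cancel, divergence_smul hg.differentiableAt
    (differentiable_chaplyginPullback hf hZ w), divergence_chaplyginPullback hf hZ, hg.fderiv]
  simp only [chaplyginPullback, _root_.smul_apply, ContinuousLinearMap.comp_apply,
    ContinuousLinearMap.coe_fst', map_smul, smul_eq_mul, nsmul_eq_mul, Nat.cast_add, Nat.cast_one]
  have hpow : (m : ℝ) * f w.1 ^ (m - 1) * f w.1 = m * f w.1 ^ m := by
    rcases m with _ | m <;> simp [pow_succ, mul_assoc]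
  linear_combination fderiv ℝ f w.1 (Z (Psi f w)).1 * hpow

end

theorem statement1_general (n : ℕ) (hn : 1 ≤ n) (X : Phase n → Phase n) (f : Vec n → ℝ)
    (hf : ContDiff ℝ (⊤ : ℕ∞) f) (hf0 : ∀ q, f q ≠ 0)
    (hHam : ∃ H_C : Phase n → ℝ, ContDiff ℝ (⊤ : ℕ∞) H_C ∧
      ∀ (z v : Phase n), Omega (ChapRescale f X z) v = fderiv ℝ H_C z v) :
    ∀ z : Phase n, divergence (fun w => f w.1 ^ (n - 1) • X w) z = 0 := by
  obtain ⟨H, hH, hΩ⟩ := hHam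
  have hf2 : ContDiff ℝ 2 f := hf.of_le (WithTop.coe_le_coe.mpr le_top)
  have hH2 : ContDiff ℝ 2 H := hH.of_le (WithTop.coe_le_coe.mpr le_top)
  intro z
  rw [← chaplyginPullback_chapRescale (hf2.differentiable two_ne_zero) hf0 X,
    eq_hamiltonianField_of_omega hΩ,
    divergence_pow_smul_chaplyginPullback hn hf2
      (fun z => (hasFDerivAt_hamiltonianField hH2 z).differentiableAt),
    divergence_hamiltonianField hH2, mul_zero]

theorem statement1 (n : ℕ) (hn : 1 ≤ n) (X : Phase n → Phase n) (f : Vec n → ℝ)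
    (hX : ContDiff ℝ (⊤ : ℕ∞) X) (hf : ContDiff ℝ (⊤ : ℕ∞) f) (hf0 : ∀ q, f q ≠ 0)
    (hHam : ∃ H_C : Phase n → ℝ, ContDiff ℝ (⊤ : ℕ∞) H_C ∧
      ∀ (z v : Phase n), Omega (ChapRescale f X z) v = fderiv ℝ H_C z v) :
    ∀ z : Phase n, divergence (fun w => f w.1 ^ (n - 1) • X w) z = 0 :=
  statement1_general n hn X f hf hf0 hHam
end
end

section
/- (Proposition 6.5, necessary and sufficient condition for Hamiltonization after the second reduction, Euclidean case Q̃ = ℝ^n.) Let B be a basic two-form and Ξ̃ a semibasic two-form on ℝ^n × ℝ^n, let H̃: ℝ^n × ℝ^n → ℝ be smooth, and let X̃ be a smooth vector field satisfying Ω(X̃(z), v) − B_z(X̃(z), v) − Ξ̃_z(X̃(z), v) = DH̃(z)[v] for all z and v. Let f: ℝ^n → ℝ be smooth and nowhere-vanishing and X̃_C the Chaplygin-rescaled vector field. Then X̃_C satisfies Hamilton's equations Ω(X̃_C(z), v) = DH̃_C(z)[v] for all z and v, with H̃_C := H̃ ∘ Ψ_{1/f}, if and only if the one-form i_{X̃_C}[df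 ∧ Θ − f²(B + Ψ_{1/f}^*Ξ̃)] vanishes identically, i.e. (df ∧ Θ)_z(X̃_C(z), v) − f(q)²·[B_z(X̃_C(z), v) + (Ψ_{1/f}^*Ξ̃)_z(X̃_C(z), v)] = 0 for all z = (q,p) and all v. -/
noncomputable section

open Matrix

/-- A semibasic two-form on phase space: a smooth assignment `z ↦ Ξ_z` of
alternating bilinear forms whose value depends only on the base components
of its arguments. -/
structure SemibasicTwoForm (n : ℕ) where
  form : Phase n → Phase n → Phase n → ℝ
  smooth : ∀ u v : Phase n, ContDiff ℝ (⊤ : ℕ∞) fun z => form z u v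
  alt : ∀ z u v : Phase n, form z u v = - form z v u
  add_left : ∀ (z u u' v : Phase n), form z (u + u') v = form z u v + form z u' v
  smul_left : ∀ (z : Phase n) (c : ℝ) (u v : Phase n), form z (c • u) v = c * form z u v
  semibasic : ∀ (z u v u' v' : Phase n), u.1 = u'.1 → v.1 = v'.1 → form z u v = form z u' v'

/-- A basic two-form on phase space: a semibasic two-form whose value is moreover
independent of the point's fiber coordinate `p`. -/
structure BasicTwoForm (n : ℕ) extends SemibasicTwoForm n where
  basic : ∀ (q p p' : Vec n) (u v : Phase n), form (q, p) u v = form (q, p') u v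

/-- Pullback of a two-form field by `Ψ_{1/f}`. -/
def pullTwoForm {n : ℕ} (f : Vec n → ℝ) (Ξ : Phase n → Phase n → Phase n → ℝ)
    (z u v : Phase n) : ℝ :=
  Ξ (PsiInv f z) (fderiv ℝ (PsiInv f) z u) (fderiv ℝ (PsiInv f) z v)

/-!
Since `Ψ_g^* Θ = g Θ` and `Ω = −dΘ`, a fiber scaling pulls the symplectic form back to
`Ψ_g^* Ω = g Ω − dg ∧ Θ`. As `DΨ_{1/f}` maps `X̃_C` to `X̃ / f`, pulling the equation of `X̃` at
`Ψ_{1/f}(z)` back along `Ψ_{1/f}` gives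
`Ω(X̃_C, ·) − dH̃_C = −f⁻¹ · i_{X̃_C}[df ∧ Θ − f² (B + Ψ_{1/f}^* Ξ̃)]`;
here `Ψ_{1/f}^* B = B` because `B` is basic and semibasic forms ignore the fiber part of `DΨ`.
Since `f ≠ 0`, the two conditions coincide.
-/

section FiberScaling

variable {n : ℕ} {g : Vec n → ℝ} {z : Phase n}

theorem hasFDerivAt_psi_s8 {g' : Vec n →L[ℝ] ℝ} (hg : HasFDerivAt g g' z.1) :
    HasFDerivAt (Psi g) ((ContinuousLinearMap.fst ℝ (Vec n) (Vec n)).prod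
      (g z.1 • ContinuousLinearMap.snd ℝ (Vec n) (Vec n)
        + (g'.comp (ContinuousLinearMap.fst ℝ (Vec n) (Vec n))).smulRight z.2)) z :=
  hasFDerivAt_fst.prodMk ((hg.comp z hasFDerivAt_fst).smul hasFDerivAt_snd)

theorem differentiableAt_psi (hg : DifferentiableAt ℝ g z.1) : DifferentiableAt ℝ (Psi g) z :=
  (hasFDerivAt_psi_s8 hg.hasFDerivAt).differentiableAt

theorem fderiv_psi_apply (hg : DifferentiableAt ℝ g z.1) (v : Phase n) :
    fderiv ℝ (Psi g) z v = (v.1, g z.1 • v.2 + fderiv ℝ g z.1 v.1 • z.2) := by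
  rw [(hasFDerivAt_psi_s8 hg.hasFDerivAt).fderiv]
  simp

theorem fderiv_psi_apply_fst (hg : DifferentiableAt ℝ g z.1) (v : Phase n) :
    (fderiv ℝ (Psi g) z v).1 = v.1 := by
  rw [fderiv_psi_apply hg]

theorem omega_fderiv_psi (hg : DifferentiableAt ℝ g z.1) (u v : Phase n) :
    Omega (fderiv ℝ (Psi g) z u) (fderiv ℝ (Psi g) z v) = g z.1 * Omega u v - dfTheta g z u v := by
  simp only [fderiv_psi_apply hg, Omega, dfTheta, dotProduct_add, add_dotProduct,
    dotProduct_smul, smul_dotProduct, smul_eq_mul, dotProduct_comm z.2]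
  ring

theorem omega_smul_left (c : ℝ) (u v : Phase n) : Omega (c • u) v = c * Omega u v := by
  simp only [Omega, Prod.smul_fst, Prod.smul_snd, smul_dotProduct, smul_eq_mul]
  ring

end FiberScaling

section Inverse

variable {n : ℕ} {f : Vec n → ℝ}

theorem psi_psiInv {z : Phase n} (hf0 : f z.1 ≠ 0) : Psi f (PsiInv f z) = z := by
  simp [PsiInv, Psi, smul_smul, hf0]

theorem psiInv_comp_psi (hf0 : ∀ q, f q ≠ 0) : PsiInv f ∘ Psi f = id := by
  ext1 z
  simp [PsiInv, Psi, smul_smul, hf0]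

theorem dfTheta_inv {z : Phase n} (hf : DifferentiableAt ℝ f z.1) (hf0 : f z.1 ≠ 0)
    (u v : Phase n) :
    dfTheta (fun q => (f q)⁻¹) z u v = -(f z.1 ^ 2)⁻¹ * dfTheta f z u v := by
  have hinv : fderiv ℝ (fun q => (f q)⁻¹) z.1
      = (ContinuousLinearMap.toSpanSingleton ℝ (-(f z.1 ^ 2)⁻¹)).comp (fderiv ℝ f z.1) :=
    ((hasFDerivAt_inv hf0).comp z.1 hf.hasFDerivAt).fderiv
  simp only [dfTheta, hinv, ContinuousLinearMap.comp_apply,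
    ContinuousLinearMap.toSpanSingleton_apply, smul_eq_mul]
  ring

theorem fderiv_psiInv_fderiv_psi (hf : Differentiable ℝ f) (hf0 : ∀ q, f q ≠ 0)
    (w x : Phase n) :
    fderiv ℝ (PsiInv f) (Psi f w) (fderiv ℝ (Psi f) w x) = x := by
  have hinv : DifferentiableAt ℝ (PsiInv f) (Psi f w) :=
    differentiableAt_psi ((hf _).inv (hf0 _))
  rw [← ContinuousLinearMap.comp_apply, ← fderiv_comp w hinv (differentiableAt_psi (hf _)),
    psiInv_comp_psi hf0, fderiv_id, ContinuousLinearMap.id_apply]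

theorem fderiv_psiInv_chapRescale (hf : Differentiable ℝ f) (hf0 : ∀ q, f q ≠ 0)
    (X : Phase n → Phase n) (z : Phase n) :
    fderiv ℝ (PsiInv f) z (ChapRescale f X z) = (f z.1)⁻¹ • X (PsiInv f z) := by
  have h := fderiv_psiInv_fderiv_psi hf hf0 (PsiInv f z) ((f z.1)⁻¹ • X (PsiInv f z))
  rwa [psi_psiInv (hf0 z.1)] at h

end Inverse

theorem SemibasicTwoForm.form_fderiv_psi {n : ℕ} (Ξ : SemibasicTwoForm n) {g : Vec n → ℝ}
    {z : Phase n} (hg : DifferentiableAt ℝ g z.1) (z' u v : Phase n) :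
    Ξ.form z' (fderiv ℝ (Psi g) z u) (fderiv ℝ (Psi g) z v) = Ξ.form z' u v :=
  Ξ.semibasic _ _ _ _ _ (fderiv_psi_apply_fst hg u) (fderiv_psi_apply_fst hg v)

theorem BasicTwoForm.form_eq_of_fst_eq {n : ℕ} (B : BasicTwoForm n) {z z' : Phase n}
    (h : z.1 = z'.1) (u v : Phase n) : B.form z u v = B.form z' u v := by
  obtain ⟨q, p⟩ := z
  obtain ⟨q', p'⟩ := z'
  obtain rfl : q = q' := h
  exact B.basic q p p' u v

section Rescaling

variable {n : ℕ} {B : BasicTwoForm n} {Ξ : SemibasicTwoForm n} {H : Phase n → ℝ}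
  {X : Phase n → Phase n} {f : Vec n → ℝ}

theorem omega_chapRescale_sub_fderiv_comp_psiInv (hH : Differentiable ℝ H)
    (hf : Differentiable ℝ f) (hf0 : ∀ q, f q ≠ 0)
    (hX : ∀ z v, Omega (X z) v - B.form z (X z) v - Ξ.form z (X z) v = fderiv ℝ H z v)
    (z v : Phase n) :
    Omega (ChapRescale f X z) v - fderiv ℝ (fun w => H (PsiInv f w)) z v
      = -(f z.1)⁻¹ * (dfTheta f z (ChapRescale f X z) v
          - f z.1 ^ 2 * (B.form z (ChapRescale f X z) v
            + pullTwoForm f Ξ.form z (ChapRescale f X z) v)) := by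
  set F := f z.1
  have hF : F ≠ 0 := hf0 z.1
  set w := PsiInv f z
  set L := fderiv ℝ (PsiInv f) z
  set XC := ChapRescale f X z
  have hL : DifferentiableAt ℝ (fun q => (f q)⁻¹) z.1 := (hf _).inv hF
  have hLXC : L XC = F⁻¹ • X w := fderiv_psiInv_chapRescale hf hf0 X z
  have hOmega : Omega (L XC) (L v) = F⁻¹ * Omega XC v + (F ^ 2)⁻¹ * dfTheta f z XC v := by
    have h := omega_fderiv_psi hL XC v
    rw [dfTheta_inv (hf _) hF] at h
    exact h.trans (by ring)
  have hB : B.form z XC v = B.form w (L XC) (L v) := by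
    rw [B.form_eq_of_fst_eq (z := z) (z' := w) rfl]
    exact (B.form_fderiv_psi hL w XC v).symm
  have hchain : fderiv ℝ (fun w => H (PsiInv f w)) z v = fderiv ℝ H w (L v) :=
    congrArg (· v) (fderiv_comp z (hH w) (differentiableAt_psi hL))
  have hXw : Omega (L XC) (L v) - B.form w (L XC) (L v) - Ξ.form w (L XC) (L v)
      = F⁻¹ * fderiv ℝ H w (L v) := by
    rw [hLXC, omega_smul_left, B.smul_left, Ξ.smul_left, ← hX]
    ring
  rw [hchain, hB, pullTwoForm]
  rw [hOmega] at hXw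
  field_simp at hXw ⊢
  linear_combination hXw

end Rescaling

theorem statement8_general (n : ℕ) (B : BasicTwoForm n) (Ξt : SemibasicTwoForm n)
    (Ht : Phase n → ℝ) (Xt : Phase n → Phase n) (f : Vec n → ℝ)
    (hHt : ContDiff ℝ (⊤ : ℕ∞) Ht)
    (hf : ContDiff ℝ (⊤ : ℕ∞) f) (hf0 : ∀ q, f q ≠ 0)
    (heq : ∀ (z v : Phase n),
      Omega (Xt z) v - B.form z (Xt z) v - Ξt.form z (Xt z) v = fderiv ℝ Ht z v) :
    (∀ (z v : Phase n),
        Omega (ChapRescale f Xt z) v = fderiv ℝ (fun w => Ht (PsiInv f w)) z v)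
      ↔ (∀ (z v : Phase n),
          dfTheta f z (ChapRescale f Xt z) v
            - (f z.1) ^ 2 * (B.form z (ChapRescale f Xt z) v
                + pullTwoForm f Ξt.form z (ChapRescale f Xt z) v) = 0) := by
  have key := omega_chapRescale_sub_fderiv_comp_psiInv (hHt.differentiable (by simp))
    (hf.differentiable (by simp)) hf0 heq
  refine forall₂_congr fun z v => ?_
  rw [← sub_eq_zero, key z v, mul_eq_zero]
  simp [hf0 z.1]

theorem statement8 (n : ℕ) (hn : 1 ≤ n) (B : BasicTwoForm n) (Ξt : SemibasicTwoForm n)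
    (Ht : Phase n → ℝ) (Xt : Phase n → Phase n) (f : Vec n → ℝ)
    (hHt : ContDiff ℝ (⊤ : ℕ∞) Ht) (hXt : ContDiff ℝ (⊤ : ℕ∞) Xt)
    (hf : ContDiff ℝ (⊤ : ℕ∞) f) (hf0 : ∀ q, f q ≠ 0)
    (heq : ∀ (z v : Phase n),
      Omega (Xt z) v - B.form z (Xt z) v - Ξt.form z (Xt z) v = fderiv ℝ Ht z v) :
    (∀ (z v : Phase n),
        Omega (ChapRescale f Xt z) v = fderiv ℝ (fun w => Ht (PsiInv f w)) z v)
      ↔ (∀ (z v : Phase n),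
          dfTheta f z (ChapRescale f Xt z) v
            - (f z.1) ^ 2 * (B.form z (ChapRescale f Xt z) v
                + pullTwoForm f Ξt.form z (ChapRescale f Xt z) v) = 0) :=
  statement8_general n B Ξt Ht Xt f hHt hf hf0 heq
end
end
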